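/- Let (x1*, x2*) be the unique pure Nash equilibrium. Then x1* + x2* ≤ (m1 + m2)/2, with equality if and only if m1 = m2 = m/2 (i.e., t = 0 and the two pools have equal power). -/

import Mathlib

/-!
Up to a positive factor, `∂r₁/∂x₁` is the polynomial `N₁ = r1DerivNum m1 m2 t p x₁ x₂`, and `N₂`
is `N₁` with the players swapped. With `s = x₁ + x₂` one has the identity
`m₁N₁ + m₂N₂ = m₁m₂ (m₁ + m₂ - (1-p)s)(m₁m₂ - s²) - t·C`, where `C > 0` once `s > 0`.
If both pools attack, the equilibrium conditions `N₁, N₂ ≥ 0` force `s² ≤ m₁m₂ ≤ ((m₁+m₂)/2)²`;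
if one does not, the other's condition alone bounds `s` by half its power. Equality in AM-GM
forces `m₁ = m₂`, and then `s² = m₁m₂` forces `t = 0`. Conversely, when `t = 0` and neither pool
attacks with full power, `N₁, N₂ ≤ 0` give `s² ≥ m₁m₂`.
-/

/-- Average reward of pool 1 in the two-player miner's dilemma with betrayal,
where the total mining power is `m1 + m2 + t`. -/
noncomputable def r1 (m1 m2 t p x1 x2 : ℝ) : ℝ :=
  (m1*m2 + m1*x1 + p*m2*x2 - (1-p)*x1^2 - (1-p)*x1*x2) /
    (((m1+m2+t) - (1-p)*(x1+x2)) * (m1*m2 + m1*x1 + m2*x2))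

/-- Average reward of pool 2. -/
noncomputable def r2 (m1 m2 t p x1 x2 : ℝ) : ℝ :=
  (m1*m2 + m2*x2 + p*m1*x1 - (1-p)*x2^2 - (1-p)*x1*x2) /
    (((m1+m2+t) - (1-p)*(x1+x2)) * (m1*m2 + m1*x1 + m2*x2))

/-- `(x1, x2)` is a pure Nash equilibrium of the two-player miner's dilemma game. -/
noncomputable def IsNash (m1 m2 t p x1 x2 : ℝ) : Prop :=
  x1 ∈ Set.Icc 0 m1 ∧ x2 ∈ Set.Icc 0 m2 ∧
  (∀ x ∈ Set.Icc (0:ℝ) m1, r1 m1 m2 t p x x2 ≤ r1 m1 m2 t p x1 x2) ∧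
  (∀ x ∈ Set.Icc (0:ℝ) m2, r2 m1 m2 t p x1 x ≤ r2 m1 m2 t p x1 x2)

open Set

theorem IsMaxOn.sub_mul_nonpos_of_hasDerivAt {f : ℝ → ℝ} {s : Set ℝ} {c y f' : ℝ}
    (h : IsMaxOn f s c) (hseg : segment ℝ c y ⊆ s) (hf : HasDerivAt f f' c) :
    (y - c) * f' ≤ 0 := by
  simpa [mul_comm] using h.localize.hasFDerivWithinAt_nonpos hf.hasFDerivAt.hasFDerivWithinAt
    (sub_mem_posTangentConeAt_of_segment_subset hseg)

theorem IsMaxOn.hasDerivAt_nonneg_of_Icc {f : ℝ → ℝ} {a b c f' : ℝ} (h : IsMaxOn f (Icc a b) c)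
    (hac : a < c) (hcb : c ≤ b) (hf : HasDerivAt f f' c) : 0 ≤ f' := by
  have hseg : segment ℝ c a ⊆ Icc a b := by
    rw [segment_symm, segment_eq_Icc hac.le]
    exact Icc_subset_Icc le_rfl hcb
  nlinarith [h.sub_mul_nonpos_of_hasDerivAt hseg hf]

theorem IsMaxOn.hasDerivAt_nonpos_of_Icc {f : ℝ → ℝ} {a b c f' : ℝ} (h : IsMaxOn f (Icc a b) c)
    (hac : a ≤ c) (hcb : c < b) (hf : HasDerivAt f f' c) : f' ≤ 0 := by
  have hseg : segment ℝ c b ⊆ Icc a b := by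
    rw [segment_eq_Icc hcb.le]
    exact Icc_subset_Icc hac le_rfl
  nlinarith [h.sub_mul_nonpos_of_hasDerivAt hseg hf]

noncomputable def r1DerivNum (m1 m2 t p x y : ℝ) : ℝ :=
  (m1*m2 + m1*x + m2*y) * (m1*m2 + p*m2*y - x*(m2+t)) -
    m2 * ((m1+m2+t) - (1-p)*(x+y)) * (m1*x + y*(x+y))

theorem r1_hasDerivAt (m1 m2 t p x y : ℝ)
    (hQ : ((m1+m2+t) - (1-p)*(x+y)) * (m1*m2 + m1*x + m2*y) ≠ 0) :
    HasDerivAt (fun z => r1 m1 m2 t p z y)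
      ((1-p) / (((m1+m2+t) - (1-p)*(x+y)) * (m1*m2 + m1*x + m2*y))^2 *
        r1DerivNum m1 m2 t p x y) x := by
  have hz := hasDerivAt_id' x
  have hN : HasDerivAt (fun z => m1*m2 + m1*z + p*m2*y - (1-p)*z^2 - (1-p)*z*y)
      (m1 - 2*(1-p)*x - (1-p)*y) x :=
    (((((hz.const_mul m1).const_add (m1*m2)).add_const (p*m2*y)).sub
      ((hz.pow 2).const_mul (1-p))).sub ((hz.const_mul (1-p)).mul_const y)).congr_deriv
      (by norm_num; ring)
  have hD : HasDerivAt (fun z => ((m1+m2+t) - (1-p)*(z+y)) * (m1*m2 + m1*z + m2*y))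
      (m1 * ((m1+m2+t) - (1-p)*(x+y)) - (1-p) * (m1*m2 + m1*x + m2*y)) x :=
    ((((hz.add_const y).const_mul (1-p)).const_sub (m1+m2+t)).mul
      (((hz.const_mul m1).const_add (m1*m2)).add_const (m2*y))).congr_deriv (by ring)
  refine (hN.div hD hQ).congr_deriv ?_
  rw [r1DerivNum]
  field_simp
  ring

theorem r2_eq_r1_swap (m1 m2 t p x y : ℝ) : r2 m1 m2 t p x y = r1 m2 m1 t p y x := by
  unfold r1 r2
  congr 1 <;> ring

theorem mul_r1DerivNum_add_mul_r1DerivNum_swap (m1 m2 t p x y : ℝ) :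
    m1 * r1DerivNum m1 m2 t p x y + m2 * r1DerivNum m2 m1 t p y x =
      m1*m2 * ((m1+m2) - (1-p)*(x+y)) * (m1*m2 - (x+y)^2) -
        t * (2*m1*m2*(m1*x + m2*y) + (m1*x + m2*y)^2 + m1*m2*(x+y)^2) := by
  unfold r1DerivNum
  ring

namespace IsNash

variable {m1 m2 t p x y : ℝ}

theorem swap (h : IsNash m1 m2 t p x y) : IsNash m2 m1 t p y x := by
  obtain ⟨hx, hy, h1, h2⟩ := h
  refine ⟨hy, hx, fun z hz => ?_, fun z hz => ?_⟩
  · simpa only [r2_eq_r1_swap] using h2 z hz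
  · simpa only [r2_eq_r1_swap] using h1 z hz

theorem denom_pos (h : IsNash m1 m2 t p x y) (hm1 : 0 < m1) (hm2 : 0 < m2) (ht : 0 ≤ t)
    (hp0 : 0 ≤ p) : 0 < (m1+m2+t) - (1-p)*(x+y) := by
  obtain ⟨⟨hx0, hx⟩, ⟨hy0, hy⟩, hmax, -⟩ := h
  have hpxy : 0 ≤ p * (x+y) := mul_nonneg hp0 (by linarith)
  refine lt_of_le_of_ne (by nlinarith) fun h0 => ?_
  obtain rfl : x = m1 := by nlinarith
  obtain rfl : y = m2 := by nlinarith
  obtain rfl : t = 0 := by nlinarith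
  obtain rfl : p = 0 := by nlinarith
  -- At this corner the reward is the junk value `0 / 0 = 0`, beaten by not attacking at all.
  have hcorner : r1 x y 0 0 x y = 0 := by
    rw [r1, div_eq_zero_iff]
    left
    ring
  have hdeviate : 0 < r1 x y 0 0 0 y := by
    rw [r1]
    apply div_pos <;> nlinarith [mul_pos hm1 hm2, mul_pos hm2 hm2]
  linarith [hmax 0 ⟨le_rfl, hm1.le⟩]

theorem exists_hasDerivAt_r1 (h : IsNash m1 m2 t p x y) (hm1 : 0 < m1) (hm2 : 0 < m2) (ht : 0 ≤ t)
    (hp0 : 0 ≤ p) (hp1 : p < 1) :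
    ∃ c > 0, HasDerivAt (fun z => r1 m1 m2 t p z y) (c * r1DerivNum m1 m2 t p x y) x := by
  have hB : 0 < m1*m2 + m1*x + m2*y := by
    nlinarith [mul_pos hm1 hm2, mul_nonneg hm1.le h.1.1, mul_nonneg hm2.le h.2.1.1]
  have hQ := mul_pos (h.denom_pos hm1 hm2 ht hp0) hB
  exact ⟨_, div_pos (by linarith) (pow_pos hQ 2), r1_hasDerivAt m1 m2 t p x y hQ.ne'⟩

theorem r1DerivNum_nonneg (h : IsNash m1 m2 t p x y) (hm1 : 0 < m1) (hm2 : 0 < m2) (ht : 0 ≤ t)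
    (hp0 : 0 ≤ p) (hp1 : p < 1) (hx : 0 < x) : 0 ≤ r1DerivNum m1 m2 t p x y := by
  obtain ⟨c, hc, hder⟩ := h.exists_hasDerivAt_r1 hm1 hm2 ht hp0 hp1
  exact nonneg_of_mul_nonneg_right
    ((isMaxOn_iff.2 h.2.2.1).hasDerivAt_nonneg_of_Icc hx h.1.2 hder) hc

theorem r1DerivNum_nonpos (h : IsNash m1 m2 t p x y) (hm1 : 0 < m1) (hm2 : 0 < m2) (ht : 0 ≤ t)
    (hp0 : 0 ≤ p) (hp1 : p < 1) (hx : x < m1) : r1DerivNum m1 m2 t p x y ≤ 0 := by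
  obtain ⟨c, hc, hder⟩ := h.exists_hasDerivAt_r1 hm1 hm2 ht hp0 hp1
  exact nonpos_of_mul_nonpos_right
    ((isMaxOn_iff.2 h.2.2.1).hasDerivAt_nonpos_of_Icc h.1.1 hx hder) hc

theorem two_mul_le_of_eq_zero (h : IsNash m1 m2 t p x y) (hm1 : 0 < m1) (hm2 : 0 < m2)
    (ht : 0 ≤ t) (hp0 : 0 ≤ p) (hp1 : p < 1) (hy : y = 0) : 2 * x ≤ m1 := by
  subst hy
  rcases h.1.1.eq_or_lt with rfl | hx
  · linarith
  have hN := h.r1DerivNum_nonneg hm1 hm2 ht hp0 hp1 hx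
  have hN0 : r1DerivNum m1 m2 t p x 0 =
      m1 * (m2^2 * (m1 - 2*x) - 2*m2*x*t - x^2*(m2*p + t)) := by
    unfold r1DerivNum
    ring
  rw [hN0] at hN
  have hK := nonneg_of_mul_nonneg_right hN hm1
  nlinarith [mul_nonneg (mul_nonneg hm2.le hx.le) ht,
    mul_nonneg (sq_nonneg x) (add_nonneg (mul_nonneg hm2.le hp0) ht), mul_pos hm2 hm2]

theorem sq_add_le_mul_of_half_le (h : IsNash m1 m2 t p x y) (hm1 : 0 < m1) (hm2 : 0 < m2)
    (ht : 0 ≤ t) (hp0 : 0 ≤ p) (hp1 : p < 1) (hs : (m1 + m2) / 2 ≤ x + y) :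
    (x + y)^2 ≤ m1 * m2 ∧ ((x + y)^2 = m1 * m2 → t = 0) := by
  have hx : 0 < x := by
    by_contra! hx
    linarith [h.swap.two_mul_le_of_eq_zero hm2 hm1 ht hp0 hp1 (le_antisymm hx h.1.1)]
  have hy : 0 < y := by
    by_contra! hy
    linarith [h.two_mul_le_of_eq_zero hm1 hm2 ht hp0 hp1 (le_antisymm hy h.2.1.1)]
  have hsum := mul_r1DerivNum_add_mul_r1DerivNum_swap m1 m2 t p x y
  have hN1 := h.r1DerivNum_nonneg hm1 hm2 ht hp0 hp1 hx
  have hN2 := h.swap.r1DerivNum_nonneg hm2 hm1 ht hp0 hp1 hy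
  have hD := h.denom_pos hm1 hm2 ht hp0
  set C := 2*m1*m2*(m1*x + m2*y) + (m1*x + m2*y)^2 + m1*m2*(x+y)^2
  have hC : 0 < C := by positivity
  have hA : 0 ≤ (m1+m2) - (1-p)*(x+y) := by nlinarith [h.1.2, h.2.1.2]
  have hmain : t * C ≤ m1*m2 * ((m1+m2) - (1-p)*(x+y)) * (m1*m2 - (x+y)^2) := by
    nlinarith [mul_nonneg hm1.le hN1, mul_nonneg hm2.le hN2]
  have hle : (x + y)^2 ≤ m1 * m2 := by
    by_contra! hlt
    -- `hD` says that the middle factor plus `t` is positive, so one of them is.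
    rcases hA.eq_or_lt with hA0 | hA0
    · rw [← hA0] at hmain
      nlinarith [mul_pos (show 0 < t by linarith) hC]
    · nlinarith [mul_pos (mul_pos (mul_pos hm1 hm2) hA0) (sub_pos.2 hlt), mul_nonneg ht hC.le]
  refine ⟨hle, fun heq => ?_⟩
  rw [heq, sub_self, mul_zero] at hmain
  exact le_antisymm (nonpos_of_mul_nonpos_left hmain hC) ht

theorem mul_le_sq_add (h : IsNash m1 m2 0 p x y) (hm1 : 0 < m1) (hm2 : 0 < m2)
    (hp0 : 0 ≤ p) (hp1 : p < 1) (hx : x < m1) (hy : y < m2) : m1 * m2 ≤ (x + y)^2 := by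
  have hsum := mul_r1DerivNum_add_mul_r1DerivNum_swap m1 m2 0 p x y
  have hN1 := h.r1DerivNum_nonpos hm1 hm2 le_rfl hp0 hp1 hx
  have hN2 := h.swap.r1DerivNum_nonpos hm2 hm1 le_rfl hp0 hp1 hy
  have hA : 0 < m1*m2 * ((m1+m2) - (1-p)*(x+y)) :=
    mul_pos (mul_pos hm1 hm2) (by nlinarith [h.1.1, h.2.1.1])
  have hmain : m1*m2 * ((m1+m2) - (1-p)*(x+y)) * (m1*m2 - (x+y)^2) ≤ 0 := by
    nlinarith [mul_nonpos_of_nonneg_of_nonpos hm1.le hN1,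
      mul_nonpos_of_nonneg_of_nonpos hm2.le hN2]
  linarith [nonpos_of_mul_nonpos_right hmain hA]

end IsNash

/-- At the (unique) pure Nash equilibrium, `x1* + x2* ≤ (m1+m2)/2`,
with equality iff `t = 0` and `m1 = m2` (i.e. `m1 = m2 = m/2`). -/
theorem stmt16 (m1 m2 t p : ℝ) (hm1 : 0 < m1) (hm2 : 0 < m2) (ht : 0 ≤ t)
    (hp0 : 0 ≤ p) (hp1 : p < 1) (x1s x2s : ℝ)
    (hne : IsNash m1 m2 t p x1s x2s) :
    x1s + x2s ≤ (m1 + m2)/2 ∧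
    (x1s + x2s = (m1 + m2)/2 ↔ (t = 0 ∧ m1 = m2)) := by
  have hbound := hne.sq_add_le_mul_of_half_le hm1 hm2 ht hp0 hp1
  have hle : x1s + x2s ≤ (m1 + m2)/2 := by
    by_contra! hlt
    nlinarith [(hbound hlt.le).1, sq_nonneg (m1 - m2)]
  refine ⟨hle, fun heq => ?_, ?_⟩
  · obtain ⟨hsq, ht0⟩ := hbound heq.ge
    have h12 : m1 = m2 := by nlinarith [sq_nonneg (m1 - m2)]
    exact ⟨ht0 (by rw [heq, h12]; ring), h12⟩
  · rintro ⟨rfl, rfl⟩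
    refine le_antisymm hle ?_
    rcases hne.1.2.lt_or_eq with hx | hx
    · rcases hne.2.1.2.lt_or_eq with hy | hy
      · nlinarith [hne.mul_le_sq_add hm1 hm2 hp0 hp1 hx hy, hne.1.1, hne.2.1.1]
      · linarith [hne.1.1]
    · linarith [hne.2.1.1]
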